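/- arXiv:0810.0411 — 4 statements merged into one kernel-verified Lean document; each statement's English description precedes it below -/
import Mathlib

section
/- In an abelian category with enough injectives in which every object has finite length, every object admits an injective envelope. -/
/-!
Finite length gives every object the ascending chain condition on subobjects: Noetherian
objects are closed under extensions, because a subobject `S ≤ T` of `Y` with the same
intersection with `X ⊆ Y` and the same image in `Y / X` equals `T`.

Embed `X` into an injective `I` and let `E ⊆ I` be maximal among the subobjects that are
essential extensions of `X`. Then `E` has no proper essential extension, since one would embed
into `I` over `E`. Taking `C ⊆ I` maximal with `C ∩ E = 0`, the composite `E → I → I / C` is an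
essential monomorphism, hence an isomorphism, so `E` is a retract of `I` and therefore injective.
-/

open CategoryTheory Limits

/-- An object of an abelian category has finite length if it is zero or is an extension of
a simple object by an object of finite length (i.e. it admits a finite composition series). -/
inductive FiniteLength {A : Type*} [Category A] [Abelian A] : A → Prop
  | of_isZero {X : A} : IsZero X → FiniteLength X
  | of_extension {X Y : A} (i : X ⟶ Y) :
      Mono i → Simple (cokernel i) → FiniteLength X → FiniteLength Y

/-- A monomorphism `f : X ⟶ I` is an essential extension if every nonzero subobject of `I`
meets the image of `X` nontrivially. -/
def IsEssentialExtension {A : Type*} [Category A] [Abelian A] {X I : A} (f : X ⟶ I) : Prop :=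
  ∀ (S : A) (j : S ⟶ I), Mono j → ¬ IsZero S → ¬ IsZero (pullback j f)

section

variable {A : Type*} [Category A] [Abelian A]

open scoped Pseudoelement

namespace CategoryTheory.Abelian.Pseudoelement

lemma exists_apply_eq_of_mk_le {P P' Z : A} (f : P ⟶ Z) (g : P' ⟶ Z) [Mono f] [Mono g]
    (h : Subobject.mk f ≤ Subobject.mk g) (p : P) : ∃ q, g q = f p :=
  ⟨Subobject.ofMkLEMk f g h p, by rw [← Pseudoelement.comp_apply, Subobject.ofMkLEMk_comp]⟩

lemma exists_apply_eq_of_imageSubobject_le {P P' Z : A} (f : P ⟶ Z) (g : P' ⟶ Z)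
    (h : imageSubobject f ≤ imageSubobject g) (p : P) : ∃ q, g q = f p := by
  obtain ⟨r, hr⟩ :=
    exists_apply_eq_of_mk_le (Limits.image.ι f) (Limits.image.ι g) h (factorThruImage f p)
  obtain ⟨q, rfl⟩ := pseudo_surjective_of_epi (factorThruImage g) r
  refine ⟨q, ?_⟩
  rw [← Limits.image.fac g, Pseudoelement.comp_apply, hr, ← Pseudoelement.comp_apply,
    Limits.image.fac]

end CategoryTheory.Abelian.Pseudoelement

open CategoryTheory.Abelian CategoryTheory.Abelian.Pseudoelement in
lemma CategoryTheory.Subobject.le_of_pullback_le_of_imageSubobject_le {X Y : A} (i : X ⟶ Y)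
    [Mono i] {S T : Subobject Y} (hST : S ≤ T)
    (hX : (Subobject.pullback i).obj T ≤ (Subobject.pullback i).obj S)
    (hQ : imageSubobject (T.arrow ≫ cokernel.π i) ≤
      imageSubobject (S.arrow ≫ cokernel.π i)) :
    T ≤ S := by
  rw [Subobject.pullback_obj, Subobject.pullback_obj] at hX
  set k := Subobject.ofLE S T hST
  have hk : k ≫ T.arrow = S.arrow := Subobject.ofLE_arrow hST
  have ker_le_range : ∀ c, (T.arrow ≫ cokernel.π i) c = 0 → ∃ s, k s = c := by
    intro c hc
    rw [Pseudoelement.comp_apply] at hc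
    obtain ⟨x, hx⟩ := pseudo_exact_of_exact (ShortComplex.exact_cokernel i) _ hc
    obtain ⟨z, hzc, hzx⟩ := pseudo_pullback (f := T.arrow) (g := i) hx.symm
    obtain ⟨z', hz'⟩ := exists_apply_eq_of_mk_le _ _ hX z
    refine ⟨pullback.fst S.arrow i z', pseudo_injective_of_mono T.arrow ?_⟩
    rw [← Pseudoelement.comp_apply, hk, ← Pseudoelement.comp_apply, pullback.condition,
      Pseudoelement.comp_apply, hz', hzx, hx]
  have : Epi k := epi_of_pseudo_surjective k fun t => by
    obtain ⟨s, hs⟩ := exists_apply_eq_of_imageSubobject_le _ _ hQ t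
    rw [← hk, Category.assoc, Pseudoelement.comp_apply] at hs
    obtain ⟨c, hc0, hc⟩ := sub_of_eq_image _ _ _ hs.symm
    obtain ⟨s', rfl⟩ := ker_le_range c hc0
    have hk0 : ∀ s, cokernel.π k (k s) = 0 := fun s => by
      rw [← Pseudoelement.comp_apply, cokernel.condition, Pseudoelement.zero_apply]
    exact pseudo_exact_of_exact (ShortComplex.exact_cokernel k) t (by rw [← hc _ _ (hk0 s), hk0])
  have := isIso_of_mono_of_epi k
  exact Subobject.le_of_comm (inv k) (by simp [hk])

lemma monotone_imageSubobject_arrow_comp {Y Z : A} (f : Y ⟶ Z) :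
    Monotone fun S : Subobject Y => imageSubobject (S.arrow ≫ f) := fun S T hST => by
  simpa only [← Subobject.ofLE_arrow hST, Category.assoc] using imageSubobject_comp_le _ _

lemma isNoetherianObject_of_mono_of_cokernel {X Y : A} (i : X ⟶ Y) [Mono i]
    [IsNoetherianObject X] [IsNoetherianObject (cokernel i)] : IsNoetherianObject Y := by
  refine (isNoetherianObject.is_iff Y).2 ?_
  let g (S : Subobject Y) : (Subobject X)ᵒᵈ × (Subobject (cokernel i))ᵒᵈ :=
    (OrderDual.toDual ((Subobject.pullback i).obj S),
      OrderDual.toDual (imageSubobject (S.arrow ≫ cokernel.π i)))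
  have hg : StrictAnti g := fun S T hST =>
    lt_of_le_not_ge
      ⟨(Subobject.pullback i).monotone hST.le, monotone_imageSubobject_arrow_comp _ hST.le⟩
      fun ⟨hX, hQ⟩ =>
        hST.not_ge (Subobject.le_of_pullback_le_of_imageSubobject_le i hST.le hX hQ)
  exact (Prod.Lex.toLex_strictMono.comp_strictAnti hg).wellFoundedGT

open scoped IsSimpleOrder in
instance isNoetherianObject_of_simple (X : A) [Simple X] : IsNoetherianObject X :=
  (isNoetherianObject.is_iff X).2 Finite.to_wellFoundedGT

lemma FiniteLength.isNoetherianObject {Y : A} (h : FiniteLength Y) : IsNoetherianObject Y := by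
  induction h with
  | of_isZero h => exact isNoetherianObject_of_isZero h
  | of_extension i _ _ _ _ => exact isNoetherianObject_of_mono_of_cokernel i

lemma isZero_of_isZero_pullback {P S X I : A} {j : S ⟶ I} {f : X ⟶ I} {a : P ⟶ S}
    {b : P ⟶ X} [Mono b] (w : a ≫ j = b ≫ f) (h : IsZero (pullback j f)) : IsZero P :=
  have := mono_of_mono_fac (pullback.lift_snd a b w)
  h.of_mono (pullback.lift a b w)

namespace IsEssentialExtension

lemma of_isIso {X I : A} (f : X ⟶ I) [IsIso f] : IsEssentialExtension f :=
  fun _ j _ hS hP => hS (hP.of_iso (asIso (pullback.fst j f)).symm)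

lemma comp {X Y Z : A} {f : X ⟶ Y} {g : Y ⟶ Z}
    (hf : IsEssentialExtension f) (hg : IsEssentialExtension g) :
    IsEssentialExtension (f ≫ g) := fun S j _ hS hP =>
  hf _ (pullback.snd j g) inferInstance (hg S j inferInstance hS)
    (isZero_of_isZero_pullback (a := pullback.fst _ _ ≫ pullback.fst _ _)
      (by rw [Category.assoc, pullback.condition, ← Category.assoc, pullback.condition,
        Category.assoc]) hP)

lemma mono_of_mono_comp {X Y Z : A} {f : X ⟶ Y} (hf : IsEssentialExtension f) (g : Y ⟶ Z)
    [Mono (f ≫ g)] : Mono g := by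
  refine Preadditive.mono_of_kernel_zero (IsZero.eq_of_src ?_ _ _)
  by_contra hK
  refine hf (kernel g) (kernel.ι g) inferInstance hK
    (IsZero.of_mono_eq_zero (pullback.snd _ _) ?_)
  rw [← cancel_mono (f ≫ g), ← Category.assoc, ← pullback.condition, Category.assoc,
    kernel.condition, comp_zero, zero_comp]

end IsEssentialExtension

lemma mono_comp_cokernel_π {C E I : A} {c : C ⟶ I} [Mono c] {m : E ⟶ I}
    (h : IsZero (pullback c m)) : Mono (m ≫ cokernel.π c) := by
  refine Preadditive.mono_of_kernel_zero ?_
  have hc := Abelian.monoLift_comp c (kernel.ι (m ≫ cokernel.π c) ≫ m)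
    (by rw [Category.assoc, kernel.condition])
  rw [← pullback.lift_snd _ _ hc, h.eq_of_tgt (pullback.lift _ _ hc) 0, zero_comp]

lemma isEssentialExtension_comp_cokernel_π {E I : A} {m : E ⟶ I} {C : Subobject I}
    (hC : Maximal (fun C : Subobject I => IsZero (pullback C.arrow m)) C) :
    IsEssentialExtension (m ≫ cokernel.π C.arrow) := by
  intro S j _ hS hP
  let q := pullback.snd j (cokernel.π C.arrow)
  have hCq : C ≤ Subobject.mk q :=
    Subobject.le_mk_of_comm (pullback.lift 0 C.arrow (by simp)) (pullback.lift_snd _ _ _)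
  have hqC : ¬ Subobject.mk q ≤ C := fun hle => hS <| by
    refine IsZero.of_mono_eq_zero j ((cancel_epi (pullback.fst j (cokernel.π C.arrow))).1 ?_)
    rw [pullback.condition, comp_zero]
    change q ≫ _ = 0
    rw [← Subobject.ofMkLE_arrow hle, Category.assoc, cokernel.condition, comp_zero]
  refine hqC (hC.2 (isZero_of_isZero_pullback (a := pullback.fst _ _ ≫
    (Subobject.underlyingIso q).hom ≫ pullback.fst j (cokernel.π C.arrow))
    (b := pullback.snd _ _) ?_ hP) hCq)
  simp [q, pullback.condition, pullback.condition_assoc]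

def essentialSubobjects {X I : A} (u : X ⟶ I) : Set (Subobject I) :=
  {Q | ∃ h : Q.Factors u, IsEssentialExtension (Q.factorThru u h)}

lemma mk_mem_essentialSubobjects {X I : A} (u : X ⟶ I) [Mono u] :
    Subobject.mk u ∈ essentialSubobjects u :=
  ⟨Subobject.mk_factors_self u, by
    rw [Subobject.factorThru_mk_self]
    exact .of_isIso _⟩

lemma isIso_of_maximal_essentialSubobjects {X I : A} [Injective I] {u : X ⟶ I}
    {E : Subobject I} (hE : Maximal (· ∈ essentialSubobjects u) E) {E' : A} (f : (E : A) ⟶ E')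
    [Mono f] (hf : IsEssentialExtension f) : IsIso f := by
  obtain ⟨hu, hess⟩ := hE.1
  let g := Injective.factorThru E.arrow f
  have hfg : f ≫ g = E.arrow := Injective.comp_factorThru _ _
  have : Mono (f ≫ g) := by rw [hfg]; infer_instance
  have : Mono g := hf.mono_of_mono_comp g
  have hEg : E ≤ Subobject.mk g := Subobject.le_mk_of_comm f hfg
  have hg : Subobject.mk g ∈ essentialSubobjects u := by
    refine ⟨Subobject.factors_of_le u hEg hu, ?_⟩
    have : (Subobject.mk g).factorThru u (Subobject.factors_of_le u hEg hu) =
        E.factorThru u hu ≫ f ≫ (Subobject.underlyingIso g).inv := by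
      simp [← cancel_mono (Subobject.mk g).arrow, hfg]
    rw [this]
    exact hess.comp (hf.comp (.of_isIso _))
  have hv : Subobject.ofMkLE g E (hE.2 hg hEg) ≫ E.arrow = g := Subobject.ofMkLE_arrow _
  refine ⟨Subobject.ofMkLE g E (hE.2 hg hEg), ?_, ?_⟩
  · simp [← cancel_mono E.arrow, hv, hfg]
  · simp [← cancel_mono g, hv, hfg]

lemma injective_of_maximal_essentialSubobjects {X I : A} [Injective I] [IsNoetherianObject I]
    {u : X ⟶ I} {E : Subobject I} (hE : Maximal (· ∈ essentialSubobjects u) E) :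
    Injective (E : A) := by
  have hbot : IsZero (pullback (⊥ : Subobject I).arrow E.arrow) :=
    ((isZero_zero A).of_iso Subobject.botCoeIsoZero).of_mono (pullback.fst _ _)
  obtain ⟨C, hC⟩ := WellFoundedGT.exists_maximal inferInstance
    {C : Subobject I | IsZero (pullback C.arrow E.arrow)} ⟨⊥, hbot⟩
  have := mono_comp_cokernel_π hC.1
  have := isIso_of_maximal_essentialSubobjects hE _ (isEssentialExtension_comp_cokernel_π hC)
  exact Retract.injective ⟨E.arrow, cokernel.π C.arrow ≫ inv (E.arrow ≫ cokernel.π C.arrow),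
    by rw [← Category.assoc, IsIso.hom_inv_id]⟩

end

/-- In an abelian category with enough injectives in which every object has finite length,
every object admits an injective envelope. -/
theorem stmt2 {A : Type*} [Category A] [Abelian A] [EnoughInjectives A]
    (hfl : ∀ X : A, FiniteLength X) (X : A) :
    ∃ (I : A) (f : X ⟶ I), Mono f ∧ Injective I ∧ IsEssentialExtension f := by
  have := (hfl (Injective.under X)).isNoetherianObject
  obtain ⟨E, hE⟩ := WellFoundedGT.exists_maximal inferInstance
    (essentialSubobjects (Injective.ι X)) ⟨_, mk_mem_essentialSubobjects (Injective.ι X)⟩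
  obtain ⟨hu, hess⟩ := hE.1
  exact ⟨E, E.factorThru _ hu, mono_of_mono_fac (E.factorThru_arrow _ hu),
    injective_of_maximal_essentialSubobjects hE, hess⟩
end

section
/- Let A be an abelian category in which every object has finite length and which has injective envelopes. A simple object T appears in a composition series of an object X if and only if Hom(X, E(T)) ≠ 0, where E(T) denotes the injective envelope of T. -/
open CategoryTheory Limits

/-- `Y` is a subquotient of `w`: there is a subobject of `w` admitting an epimorphism
onto `Y`.  For `Y` simple and `w` of finite length this says exactly that `Y` appears in a
composition series of `w` (Jordan–Hölder). -/
def IsSubquotientOf {A : Type*} [Category A] [Abelian A] (Y w : A) : Prop :=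
  ∃ (S : A) (i : S ⟶ w) (p : S ⟶ Y), Mono i ∧ Epi p

/-- In an abelian category in which all objects have finite length and which has injective
envelopes, a simple object `T` appears in a composition series of `X` (i.e. is a simple
subquotient of `X`) if and only if `Hom(X, E(T)) ≠ 0`, where `E(T)` is the injective
envelope of `T`. -/
theorem stmt3 {A : Type*} [Category A] [Abelian A] [EnoughInjectives A]
    (hfl : ∀ X : A, FiniteLength X)
    (henv : ∀ X : A, ∃ (I : A) (f : X ⟶ I), Mono f ∧ Injective I ∧ IsEssentialExtension f)
    (T : A) [Simple T] (E : A) (e : T ⟶ E)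
    (he : Mono e ∧ Injective E ∧ IsEssentialExtension e) (X : A) :
    IsSubquotientOf T X ↔ ∃ g : X ⟶ E, g ≠ 0 := by
  obtain ⟨hmono_e, hinj_E, hess⟩ := he
  have hTnz : ¬ IsZero T := by
    intro hz
    exact (id_nonzero T) (hz.eq_of_src _ _)
  constructor
  · rintro ⟨S, i, p, hi, hp⟩
    -- extend p ≫ e : S ⟶ E along the mono i : S ⟶ X
    have := hi
    have := hp
    refine ⟨Injective.factorThru (p ≫ e) i, ?_⟩
    intro hg0
    have h1 : i ≫ Injective.factorThru (p ≫ e) i = p ≫ e := Injective.comp_factorThru _ _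
    rw [hg0, Limits.comp_zero] at h1
    have he0 : e = 0 := by
      have : p ≫ e = p ≫ 0 := by rw [h1.symm, Limits.comp_zero]
      exact (cancel_epi p).mp this
    exact hTnz (by
      have : (𝟙 T) ≫ e = 0 ≫ e := by simp [he0]
      have hid : (𝟙 T) = 0 := (cancel_mono e).mp this
      exact (IsZero.iff_id_eq_zero _).mpr hid)
  · rintro ⟨g, hg⟩
    -- image factorization of g
    set m : image g ⟶ E := image.ι g with hm
    have himnz : ¬ IsZero (image g) := by
      intro hz
      apply hg
      have : factorThruImage g = 0 := hz.eq_of_tgt _ _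
      rw [← image.fac g, this, Limits.zero_comp]
    have hP : ¬ IsZero (pullback m e) := hess (image g) m inferInstance himnz
    -- pullback.snd : pullback m e ⟶ T is a nonzero mono into a simple object, hence iso
    have hmono_snd : Mono (pullback.snd m e) := inferInstance
    have hsnd_ne : pullback.snd m e ≠ 0 := by
      intro h0
      exact hP (by
        have : Mono (0 : pullback m e ⟶ T) := h0 ▸ hmono_snd
        exact IsZero.of_mono_eq_zero (0 : pullback m e ⟶ T) rfl)
    have hiso : IsIso (pullback.snd m e) := isIso_of_mono_of_nonzero hsnd_ne
    -- pull back along factorThruImage g to get a subobject of X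
    set Q := pullback (pullback.fst m e) (factorThruImage g) with hQ
    refine ⟨Q, pullback.snd (pullback.fst m e) (factorThruImage g),
      pullback.fst (pullback.fst m e) (factorThruImage g) ≫ pullback.snd m e, ?_, ?_⟩
    · -- mono: pullback of the mono pullback.fst m e (m, e both... e mono so fst mono)
      have : Mono (pullback.fst m e) := inferInstance
      infer_instance
    · have : Epi (pullback.fst (pullback.fst m e) (factorThruImage g)) := inferInstance
      exact epi_comp _ _
end

section
/- Let D be a triangulated category and U a cluster tilting subcategory, and let D/U be the additive quotient by morphisms factoring through U. Then any distinguished triangle x → y → z → Σx in D induces an exact sequence x̄ → ȳ → z̄ in D/U. -/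
/-!
By the refinement criterion for exactness in an abelian category, it suffices to show: every
`x₂ : A₀ ⟶ ȳ` with `x₂ ≫ ḡ = 0` lifts along `f̄` after precomposition with an epimorphism.
Every object `d` receives a morphism `p : u⟦-1⟧ ⟶ d` with `u ∈ U` and `p̄` epi: shift by `-1` the
triangle on a right `U`-approximation of `d⟦1⟧`, whose cone lies in `U⟦1⟧`. Since
`Hom(u⟦-1⟧, U) ≅ Hom(u, U⟦1⟧) = 0`, a morphism out of `u⟦-1⟧` factoring through `U` is zero. So if
`ψ : d ⟶ y` lifts `x₂`, then `p ≫ ψ ≫ g = 0` already in `D`, and `p ≫ ψ` factors through `f`.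
-/

open CategoryTheory Limits Pretriangulated Opposite

noncomputable section

/-- The morphisms `x ⟶ y` in a category that factor through an object of `U`. -/
def FactorsThru {D : Type*} [Category D] (U : Set D) {x y : D} (f : x ⟶ y) : Prop :=
  ∃ (u : D) (_ : u ∈ U) (g : x ⟶ u) (h : u ⟶ y), g ≫ h = f

/-- A full subcategory (given by its set of objects) is precovering. -/
def IsPrecovering {D : Type*} [Category D] (V : Set D) : Prop :=
  ∀ x : D, ∃ (v : D) (_ : v ∈ V) (p : v ⟶ x),
    ∀ v' ∈ V, ∀ f : v' ⟶ x, ∃ g : v' ⟶ v, g ≫ p = f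

/-- A full subcategory (given by its set of objects) is preenveloping. -/
def IsPreenveloping {D : Type*} [Category D] (V : Set D) : Prop :=
  ∀ x : D, ∃ (v : D) (_ : v ∈ V) (i : x ⟶ v),
    ∀ v' ∈ V, ∀ f : x ⟶ v', ∃ g : v ⟶ v', i ≫ g = f

/-- A full subcategory `V` of a triangulated category is maximal 1-orthogonal if
`v ∈ V ⇔ Hom(V, Σv) = 0 ⇔ Hom(v, ΣV) = 0`. -/
def MaxOneOrthogonal {D : Type*} [Category D] [Preadditive D] [HasShift D ℤ] (V : Set D) : Prop :=
  (∀ x : D, x ∈ V ↔ ∀ v ∈ V, ∀ f : v ⟶ x⟦(1:ℤ)⟧, f = 0) ∧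
  (∀ x : D, x ∈ V ↔ ∀ v ∈ V, ∀ f : x ⟶ v⟦(1:ℤ)⟧, f = 0)

/-- A cluster tilting subcategory is a maximal 1-orthogonal subcategory which is
precovering and preenveloping. -/
def ClusterTilting {D : Type*} [Category D] [Preadditive D] [HasShift D ℤ] (U : Set D) : Prop :=
  MaxOneOrthogonal U ∧ IsPrecovering U ∧ IsPreenveloping U

namespace ClusterTilting

variable {D : Type*} [Category D] [Preadditive D] [HasShift D ℤ] {U : Set D}

lemma hom_shift_eq_zero (hU : ClusterTilting U) {u v : D} (hu : u ∈ U) (hv : v ∈ U)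
    (f : u ⟶ v⟦(1:ℤ)⟧) : f = 0 :=
  (hU.1.1 v).1 hv u hu f

lemma shift_neg_one_mem (hU : ClusterTilting U) {w : D} (hw : ∀ v ∈ U, ∀ f : v ⟶ w, f = 0) :
    w⟦(-1:ℤ)⟧ ∈ U := by
  refine (hU.1.1 _).2 fun v hv f => ?_
  let e := (shiftFunctorCompIsoId D (-1:ℤ) 1 (by norm_num)).app w
  rw [← cancel_mono e.hom, zero_comp]
  exact hw v hv _

variable [∀ (n : ℤ), (shiftFunctor D n).Additive]

lemma hom_from_shift_neg_one_eq_zero (hU : ClusterTilting U) {u v : D} (hu : u ∈ U)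
    (hv : v ∈ U) (f : u⟦(-1:ℤ)⟧ ⟶ v) : f = 0 := by
  let e := (shiftFunctorCompIsoId D (-1:ℤ) 1 (by norm_num)).app u
  apply (shiftFunctor D (1:ℤ)).map_injective
  rw [Functor.map_zero, ← cancel_epi e.inv, comp_zero]
  exact hU.hom_shift_eq_zero hu hv _

lemma eq_zero_of_factorsThru (hU : ClusterTilting U) {u c : D} (hu : u ∈ U)
    {f : u⟦(-1:ℤ)⟧ ⟶ c} (hf : FactorsThru U f) : f = 0 := by
  obtain ⟨v, hv, g, h, rfl⟩ := hf
  rw [hU.hom_from_shift_neg_one_eq_zero hu hv g, zero_comp]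

variable [HasZeroObject D] [Pretriangulated D]

lemma exists_shift_neg_one_cover (hU : ClusterTilting U) (d : D) :
    ∃ u ∈ U, ∃ p : u⟦(-1:ℤ)⟧ ⟶ d, ∀ ⦃c : D⦄ (ψ : d ⟶ c), p ≫ ψ = 0 → FactorsThru U ψ := by
  obtain ⟨u, hu, q, hq⟩ := hU.2.1 (d⟦(1:ℤ)⟧)
  obtain ⟨w, s, m, hT⟩ := distinguished_cocone_triangle q
  have hqs : q ≫ s = 0 := comp_distTriang_mor_zero₁₂ _ hT
  have hT₃ : ∀ ⦃v : D⦄ (t : v ⟶ w), t ≫ m = 0 → ∃ t₁ : v ⟶ d⟦(1:ℤ)⟧, t = t₁ ≫ s :=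
    fun _ => Triangle.coyoneda_exact₃ _ hT
  have hw : ∀ v ∈ U, ∀ t : v ⟶ w, t = 0 := by
    intro v hv t
    obtain ⟨t₁, rfl⟩ := hT₃ t (hU.hom_shift_eq_zero hv hu _)
    obtain ⟨t₂, rfl⟩ := hq v hv t₁
    rw [Category.assoc, hqs, comp_zero]
  have hT₂ : ∀ ⦃c : D⦄ (f : d⟦(1:ℤ)⟧⟦(-1:ℤ)⟧ ⟶ c), ((-1:ℤ).negOnePow • q⟦(-1:ℤ)⟧') ≫ f = 0 →
      ∃ g : w⟦(-1:ℤ)⟧ ⟶ c, f = ((-1:ℤ).negOnePow • s⟦(-1:ℤ)⟧') ≫ g :=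
    fun _ => Triangle.yoneda_exact₂ _ (Triangle.shift_distinguished _ hT (-1))
  let e : d⟦(1:ℤ)⟧⟦(-1:ℤ)⟧ ≅ d := (shiftFunctorCompIsoId D (1:ℤ) (-1) (by norm_num)).app d
  refine ⟨u, hu, ((-1:ℤ).negOnePow • q⟦(-1:ℤ)⟧') ≫ e.hom, fun c ψ hψ => ?_⟩
  obtain ⟨χ, hχ⟩ := hT₂ (e.hom ≫ ψ) (by rwa [Category.assoc] at hψ)
  exact ⟨w⟦(-1:ℤ)⟧, hU.shift_neg_one_mem hw, e.inv ≫ ((-1:ℤ).negOnePow • s⟦(-1:ℤ)⟧'), χ,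
    by rw [Category.assoc, ← hχ, Iso.inv_hom_id_assoc]⟩

end ClusterTilting

lemma epi_map_of_factorsThru_comp {D A : Type*} [Category D] [Preadditive D] [Category A]
    [Preadditive A] {U : Set D} (π : D ⥤ A) [π.Full] [π.EssSurj]
    (hπ : ∀ ⦃x y : D⦄ (f : x ⟶ y), π.map f = 0 ↔ FactorsThru U f) {x d : D} (p : x ⟶ d)
    (hp : ∀ ⦃c : D⦄ (ψ : d ⟶ c), FactorsThru U (p ≫ ψ) → FactorsThru U ψ) :
    Epi (π.map p) := by
  refine Preadditive.epi_of_cancel_zero _ fun {R} t ht => ?_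
  let e := π.objObjPreimageIso R
  obtain ⟨ψ, hψ⟩ := π.map_surjective (t ≫ e.inv)
  have hpψ : π.map (p ≫ ψ) = 0 := by rw [π.map_comp, hψ, reassoc_of% ht, zero_comp]
  have hψ₀ : π.map ψ = 0 := (hπ ψ).2 (hp ψ ((hπ _).1 hpψ))
  rw [← cancel_mono e.inv, zero_comp, ← hψ, hψ₀]

/-- Let `D` be a triangulated category (skeletally small, `k`-linear with finite dimensional
Hom spaces, with a Serre functor `S`) and `U` a cluster tilting subcategory, and let
`π : D ⥤ A` be the projection onto the abelian quotient `D/U` (a full, essentially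
surjective additive functor killing exactly the morphisms factoring through `U`).
Then any distinguished triangle `x → y → z → Σx` in `D` induces an exact sequence
`x̄ → ȳ → z̄` in `D/U`. -/
theorem stmt6 {k : Type*} [Field k]
    {D : Type*} [Category D] [Preadditive D] [Linear k D] [HasZeroObject D]
    [HasShift D ℤ] [∀ (n : ℤ), (shiftFunctor D n).Additive] [Pretriangulated D]
    [∀ x y : D, FiniteDimensional k (x ⟶ y)]
    (S : D ⥤ D) [S.IsEquivalence]
    (hSerre : ∀ a b : D, Nonempty ((a ⟶ b) ≃ₗ[k] Module.Dual k (b ⟶ S.obj a)))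
    (U : Set D) (hU : ClusterTilting U)
    {A : Type*} [Category A] [Abelian A]
    (π : D ⥤ A) [π.Full] [π.EssSurj] [π.Additive]
    (hπ : ∀ ⦃x y : D⦄ (f : x ⟶ y), π.map f = 0 ↔ FactorsThru U f)
    (T : Triangle D) (hT : T ∈ distTriang D) :
    (ShortComplex.mk (π.map T.mor₁) (π.map T.mor₂)
      (by rw [← π.map_comp, comp_distTriang_mor_zero₁₂ _ hT, π.map_zero])).Exact := by
  rw [ShortComplex.exact_iff_exact_up_to_refinements]
  rintro A₀ x₂ (hx₂ : x₂ ≫ π.map T.mor₂ = 0)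
  let e := π.objObjPreimageIso A₀
  obtain ⟨u, hu, p, hp⟩ := hU.exists_shift_neg_one_cover (π.objPreimage A₀)
  have : Epi (π.map p) :=
    epi_map_of_factorsThru_comp π hπ p fun _ ψ h => hp ψ (hU.eq_zero_of_factorsThru hu h)
  obtain ⟨ψ, hψ⟩ := π.map_surjective (e.hom ≫ x₂)
  have hψ₂ : (p ≫ ψ) ≫ T.mor₂ = 0 :=
    hU.eq_zero_of_factorsThru hu ((hπ _).1 (by simp [hψ, hx₂]))
  obtain ⟨n, hn⟩ := Triangle.coyoneda_exact₂ _ hT (p ≫ ψ) hψ₂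
  exact ⟨_, π.map p ≫ e.hom, epi_comp _ _, π.map n, by simp [← π.map_comp, ← hn, hψ]⟩
end
end

section
/- Let D be a triangulated category with cluster tilting subcategory U, and let u ∈ U and x ∈ D. Then the projection functor induces an isomorphism Hom_D(Σ⁻¹u, x) ≅ Hom_{D/U}(Σ⁻¹u, x) between the Hom space in D and the Hom space in the abelian quotient D/U. -/
open CategoryTheory Limits Pretriangulated Opposite

noncomputable section

/-- Let `D` be a triangulated category with cluster tilting subcategory `U` and let
`π : D ⥤ A` be the projection onto the abelian quotient `D/U`.  For `u ∈ U` and `x ∈ D`,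
the projection functor induces an isomorphism
`Hom_D(Σ⁻¹u, x) ≅ Hom_{D/U}(Σ⁻¹u, x)`, i.e. `f ↦ π.map f` is bijective. -/
theorem stmt7 {k : Type*} [Field k]
    {D : Type*} [Category D] [Preadditive D] [Linear k D] [HasZeroObject D]
    [HasShift D ℤ] [∀ (n : ℤ), (shiftFunctor D n).Additive] [Pretriangulated D]
    [∀ x y : D, FiniteDimensional k (x ⟶ y)]
    (S : D ⥤ D) [S.IsEquivalence]
    (hSerre : ∀ a b : D, Nonempty ((a ⟶ b) ≃ₗ[k] Module.Dual k (b ⟶ S.obj a)))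
    (U : Set D) (hU : ClusterTilting U)
    {A : Type*} [Category A] [Abelian A]
    (π : D ⥤ A) [π.Full] [π.EssSurj] [π.Additive]
    (hπ : ∀ ⦃x y : D⦄ (f : x ⟶ y), π.map f = 0 ↔ FactorsThru U f)
    (u : D) (hu : u ∈ U) (x : D) :
    Function.Bijective (fun f : (u⟦(-1:ℤ)⟧ ⟶ x) => π.map f) := by
  constructor
  · intro f g hfg
    have h0 : π.map (f - g) = 0 := by
      rw [π.map_sub]
      simpa using sub_eq_zero.2 hfg
    obtain ⟨v, hv, a, b, hab⟩ := (hπ (f - g)).1 h0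
    have ha : a = 0 := by
      have hzero : ((shiftFunctorCompIsoId D (-1 : ℤ) (1 : ℤ) (by simp)).inv.app u)
          ≫ (shiftFunctor D (1:ℤ)).map a = 0 :=
        (hU.1.2 u).1 hu v hv _
      have : (shiftFunctor D (1:ℤ)).map a =
          ((shiftFunctorCompIsoId D (-1 : ℤ) (1 : ℤ) (by simp)).hom.app u) ≫ 0 := by
        rw [← hzero, ← Category.assoc, Iso.hom_inv_id_app, Category.id_comp]
      rw [comp_zero] at this
      exact (shiftFunctor D (1:ℤ)).map_injective (by simpa using this)
    have : f - g = 0 := by rw [← hab, ha, zero_comp]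
    exact sub_eq_zero.1 this
  · exact fun φ => π.map_surjective φ
end
end
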